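/- Let (Γ, σ) be a finite measure space, j : ℝ → ℝ locally Lipschitz with ∂j satisfying the growth condition |ξ| ≤ c₁ + c₂|u|. Suppose uₙ → u strongly in L²(Γ), uₙ(x) → u(x) a.e. with |uₙ(x)| ≤ h(x) for some h ∈ L²(Γ), and ξₙ → ξ weakly in L²(Γ) with ξₙ(x) ∈ ∂j(uₙ(x)) a.e. for each n. Then ξ(x) ∈ ∂j(u(x)) for a.e. x ∈ Γ. -/

import Mathlib

/-!
For locally Lipschitz `j`, the direction map `v ↦ j⁰(w; v)` is positively homogeneous and
subadditive, so `ξ ∈ ∂j(w)` only has to be checked for `v = ±1`, and `w ↦ j⁰(w; v)` is upper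
semicontinuous. Fix `v` and a set `s` of finite measure. Testing the weak convergence against
`1_s` gives `∫_s ξ v = lim ∫_s ξₙ v`, and `ξₙ v ≤ j⁰(uₙ; v) ≤ max (j⁰(uₙ; v)) (j⁰(u; v))`.
By upper semicontinuity the last function tends a.e. to `j⁰(u; v)`, and the growth condition
dominates it by `|v| (c₁ + c₂ h) + |j⁰(u; v)|`, so `∫_s ξ v ≤ ∫_s j⁰(u; v)`. As `s` is
arbitrary, `ξ v ≤ j⁰(u; v)` a.e.
-/

open MeasureTheory Filter Set

noncomputable def clarkeDirDeriv (j : ℝ → ℝ) (u v : ℝ) : ℝ :=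
  Filter.limsup (fun p : ℝ × ℝ => (j (p.1 + p.2 * v) - j p.1) / p.2)
    ((nhds u) ×ˢ (nhdsWithin 0 (Set.Ioi 0)))

noncomputable def clarkeSubdiff (j : ℝ → ℝ) (u : ℝ) : Set ℝ :=
  {ξ : ℝ | ∀ v : ℝ, ξ * v ≤ clarkeDirDeriv j u v}

open Topology

noncomputable def clarkeQuotient (j : ℝ → ℝ) (v : ℝ) (p : ℝ × ℝ) : ℝ :=
  (j (p.1 + p.2 * v) - j p.1) / p.2

section ClarkeDirDeriv

variable {j : ℝ → ℝ}

theorem clarkeDirDeriv_eq_limsup (j : ℝ → ℝ) (w v : ℝ) :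
    clarkeDirDeriv j w v = limsup (clarkeQuotient j v) (𝓝 w ×ˢ 𝓝[>] 0) :=
  rfl

theorem clarkeDirDeriv_zero (j : ℝ → ℝ) (w : ℝ) : clarkeDirDeriv j w 0 = 0 := by
  simp [clarkeDirDeriv]

theorem tendsto_affine_nhds_prod_nhdsGT (w a : ℝ) {b : ℝ} (hb : 0 < b) :
    Tendsto (fun p : ℝ × ℝ => (p.1 + p.2 * a, b * p.2)) (𝓝 w ×ˢ 𝓝[>] 0) (𝓝 w ×ˢ 𝓝[>] 0) := by
  have h₂ : Tendsto (fun p : ℝ × ℝ => p.2) (𝓝 w ×ˢ 𝓝[>] 0) (𝓝[>] 0) := tendsto_snd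
  have h₂' := h₂.mono_right nhdsWithin_le_nhds
  have h₁ : Tendsto (fun p : ℝ × ℝ => p.1 + p.2 * a) (𝓝 w ×ˢ 𝓝[>] 0) (𝓝 w) := by
    simpa using tendsto_fst.add (h₂'.mul_const a)
  refine h₁.prodMk (tendsto_nhdsWithin_iff.2 ⟨by simpa using h₂'.const_mul b, ?_⟩)
  exact (h₂.eventually eventually_mem_nhdsWithin).mono fun p hp => mul_pos hb hp

theorem map_affine_nhds_prod_nhdsGT (w a : ℝ) {b : ℝ} (hb : 0 < b) :
    map (fun p : ℝ × ℝ => (p.1 + p.2 * a, b * p.2)) (𝓝 w ×ˢ 𝓝[>] 0) = 𝓝 w ×ˢ 𝓝[>] 0 := by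
  refine map_eq_of_inverse (fun p => (p.1 + p.2 * (-a / b), b⁻¹ * p.2)) ?_
    (tendsto_affine_nhds_prod_nhdsGT w a hb)
    (tendsto_affine_nhds_prod_nhdsGT w _ (inv_pos.2 hb))
  funext p
  simp only [Function.comp_apply, id]
  ext
  · field_simp
    ring
  · field_simp

theorem LocallyLipschitz.isBoundedUnder_abs_clarkeQuotient (hj : LocallyLipschitz j) (w v : ℝ) :
    IsBoundedUnder (· ≤ ·) (𝓝 w ×ˢ 𝓝[>] 0) fun p => |clarkeQuotient j v p| := by
  obtain ⟨K, t, ht, hK⟩ := hj w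
  have hshift := (tendsto_affine_nhds_prod_nhdsGT w v one_pos).fst
  refine isBoundedUnder_of_eventually_le (a := K * |v|) ?_
  filter_upwards [tendsto_fst.eventually ht, hshift.eventually ht,
    tendsto_snd.eventually (eventually_mem_nhdsWithin (a := (0 : ℝ)) (s := Ioi 0))]
    with p hp₁ hp₂ (hp : 0 < p.2)
  rw [clarkeQuotient, abs_div, abs_of_pos hp, div_le_iff₀ hp]
  calc |j (p.1 + p.2 * v) - j p.1| ≤ K * |p.1 + p.2 * v - p.1| := by
        simpa only [Real.dist_eq] using hK.dist_le_mul _ hp₂ _ hp₁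
    _ = K * |v| * p.2 := by rw [add_sub_cancel_left, abs_mul, abs_of_pos hp]; ring

theorem LocallyLipschitz.clarkeDirDeriv_mul (hj : LocallyLipschitz j) (w v : ℝ) {c : ℝ}
    (hc : 0 < c) : clarkeDirDeriv j w (c * v) = c * clarkeDirDeriv j w v := by
  obtain ⟨hbdd, hbdd'⟩ := isBoundedUnder_le_abs.1 (hj.isBoundedUnder_abs_clarkeQuotient w v)
  have hQ : clarkeQuotient j (c * v)
      = ((c * ·) ∘ clarkeQuotient j v) ∘ fun p => (p.1 + p.2 * 0, c * p.2) := by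
    funext p
    simp only [clarkeQuotient, Function.comp_apply, mul_zero, add_zero]
    rw [mul_left_comm, mul_div_assoc', mul_div_mul_left _ _ hc.ne', mul_assoc]
  rw [clarkeDirDeriv_eq_limsup, hQ, limsup_comp, map_affine_nhds_prod_nhdsGT w 0 hc,
    clarkeDirDeriv_eq_limsup]
  exact (Monotone.map_limsup_of_continuousAt (monotone_mul_left_of_nonneg hc.le) _
    (continuous_const_mul c).continuousAt hbdd hbdd'.isCoboundedUnder_le).symm

theorem LocallyLipschitz.clarkeDirDeriv_add_le (hj : LocallyLipschitz j) (w v v' : ℝ) :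
    clarkeDirDeriv j w (v + v') ≤ clarkeDirDeriv j w v + clarkeDirDeriv j w v' := by
  set A : ℝ × ℝ → ℝ × ℝ := fun p => (p.1 + p.2 * v, 1 * p.2)
  obtain ⟨h₁, h₂⟩ := isBoundedUnder_le_abs.1 (hj.isBoundedUnder_abs_clarkeQuotient w v)
  obtain ⟨h₃, h₄⟩ := isBoundedUnder_le_abs.1 ((tendsto_affine_nhds_prod_nhdsGT w v one_pos)
    |>.isBoundedUnder_comp (hj.isBoundedUnder_abs_clarkeQuotient w v'))
  have hQ : clarkeQuotient j (v + v') = clarkeQuotient j v + clarkeQuotient j v' ∘ A := by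
    funext p
    simp only [clarkeQuotient, A, Pi.add_apply, Function.comp_apply, one_mul]
    rw [add_assoc, ← mul_add, ← add_div]
    ring
  calc clarkeDirDeriv j w (v + v')
      = limsup (clarkeQuotient j v + clarkeQuotient j v' ∘ A) (𝓝 w ×ˢ 𝓝[>] 0) := by
        rw [clarkeDirDeriv_eq_limsup, hQ]
    _ ≤ limsup (clarkeQuotient j v) (𝓝 w ×ˢ 𝓝[>] 0)
          + limsup (clarkeQuotient j v' ∘ A) (𝓝 w ×ˢ 𝓝[>] 0) :=
        limsup_add_le h₂ h₁ h₄.isCoboundedUnder_le h₃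
    _ = clarkeDirDeriv j w v + clarkeDirDeriv j w v' := by
        rw [limsup_comp, map_affine_nhds_prod_nhdsGT w v one_pos]
        rfl

theorem LocallyLipschitz.neg_clarkeDirDeriv_le (hj : LocallyLipschitz j) (w v : ℝ) :
    -clarkeDirDeriv j w v ≤ clarkeDirDeriv j w (-v) := by
  have := hj.clarkeDirDeriv_add_le w v (-v)
  rw [add_neg_cancel, clarkeDirDeriv_zero] at this
  linarith

theorem LocallyLipschitz.upperSemicontinuous_clarkeDirDeriv (hj : LocallyLipschitz j) (v : ℝ) :
    UpperSemicontinuous fun w => clarkeDirDeriv j w v := by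
  intro w r hr
  obtain ⟨r', hwr', hr'r⟩ := exists_between hr
  obtain ⟨U, hU, V, hV, hUV⟩ := eventually_prod_iff.1 <| eventually_lt_of_limsup_lt hwr'
    (isBoundedUnder_le_abs.1 (hj.isBoundedUnder_abs_clarkeQuotient w v)).1
  filter_upwards [hU.eventually_nhds] with w' hw'
  have hbdd' := (isBoundedUnder_le_abs.1 (hj.isBoundedUnder_abs_clarkeQuotient w' v)).2
  exact (limsup_le_of_le hbdd'.isCoboundedUnder_le
    (eventually_prod_iff.2 ⟨U, hw', V, hV, fun {_} hx {_} hy => (hUV hx hy).le⟩)).trans_lt hr'r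

theorem LocallyLipschitz.clarkeDirDeriv_of_pos (hj : LocallyLipschitz j) (w : ℝ) {v : ℝ}
    (hv : 0 < v) : clarkeDirDeriv j w v = v * clarkeDirDeriv j w 1 := by
  simpa using hj.clarkeDirDeriv_mul w 1 hv

theorem LocallyLipschitz.clarkeDirDeriv_of_neg (hj : LocallyLipschitz j) (w : ℝ) {v : ℝ}
    (hv : v < 0) : clarkeDirDeriv j w v = -v * clarkeDirDeriv j w (-1) := by
  simpa using hj.clarkeDirDeriv_mul w (-1) (neg_pos.2 hv)

theorem LocallyLipschitz.mem_clarkeSubdiff_iff (hj : LocallyLipschitz j) {w ξ : ℝ} :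
    ξ ∈ clarkeSubdiff j w ↔ ξ ≤ clarkeDirDeriv j w 1 ∧ -ξ ≤ clarkeDirDeriv j w (-1) := by
  refine ⟨fun h => ⟨by simpa using h 1, by simpa using h (-1)⟩, fun ⟨h₁, hm₁⟩ v => ?_⟩
  rcases lt_trichotomy v 0 with hv | rfl | hv
  · rw [hj.clarkeDirDeriv_of_neg w hv]
    nlinarith
  · simp [clarkeDirDeriv_zero]
  · rw [hj.clarkeDirDeriv_of_pos w hv]
    nlinarith

theorem LocallyLipschitz.abs_clarkeDirDeriv_le (hj : LocallyLipschitz j) {c₁ c₂ : ℝ}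
    (hgrowth : ∀ u ξ : ℝ, ξ ∈ clarkeSubdiff j u → |ξ| ≤ c₁ + c₂ * |u|) (w v : ℝ) :
    |clarkeDirDeriv j w v| ≤ |v| * (c₁ + c₂ * |w|) := by
  have h₁ : |clarkeDirDeriv j w 1| ≤ c₁ + c₂ * |w| := hgrowth w _ <|
    hj.mem_clarkeSubdiff_iff.2 ⟨le_rfl, hj.neg_clarkeDirDeriv_le w 1⟩
  have hm₁ : |clarkeDirDeriv j w (-1)| ≤ c₁ + c₂ * |w| := by
    rw [← abs_neg]
    exact hgrowth w _ <| hj.mem_clarkeSubdiff_iff.2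
      ⟨by simpa using hj.neg_clarkeDirDeriv_le w (-1), (neg_neg _).le⟩
  rcases lt_trichotomy v 0 with hv | rfl | hv
  · rw [hj.clarkeDirDeriv_of_neg w hv, abs_mul, abs_neg]
    exact mul_le_mul_of_nonneg_left hm₁ (abs_nonneg v)
  · simp [clarkeDirDeriv_zero]
  · rw [hj.clarkeDirDeriv_of_pos w hv, abs_mul]
    exact mul_le_mul_of_nonneg_left h₁ (abs_nonneg v)

end ClarkeDirDeriv

theorem abs_max_le_abs_add_abs_of_le {a b c : ℝ} (h : a ≤ b) : |max a c| ≤ |b| + |c| :=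
  abs_le.2 ⟨by linarith [neg_abs_le c, le_max_right a c, abs_nonneg b],
    max_le (by linarith [le_abs_self b, abs_nonneg c]) (by linarith [le_abs_self c, abs_nonneg b])⟩

section ReverseFatou

variable {α : Type*} [MeasurableSpace α] {μ : Measure α}

theorem integrable_max_of_ae_le {F B G : α → ℝ} (hF : AEStronglyMeasurable F μ)
    (hB : Integrable B μ) (hG : Integrable G μ) (hFB : ∀ᵐ x ∂μ, F x ≤ B x) :
    Integrable (fun x => max (F x) (G x)) μ :=
  (hB.abs.add hG.abs).mono' (hF.sup hG.aestronglyMeasurable)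
    (hFB.mono fun _ hx => abs_max_le_abs_add_abs_of_le hx)

/-- A reverse Fatou lemma: the hypothesis on `F` says exactly that `max (F n) G → G` pointwise. -/
theorem tendsto_integral_max_of_eventually_lt {F : ℕ → α → ℝ} {B G : α → ℝ}
    (hF : ∀ n, AEStronglyMeasurable (F n) μ) (hB : Integrable B μ) (hG : Integrable G μ)
    (hFB : ∀ n, ∀ᵐ x ∂μ, F n x ≤ B x)
    (hFG : ∀ᵐ x ∂μ, ∀ r, G x < r → ∀ᶠ n in atTop, F n x < r) :
    Tendsto (fun n => ∫ x, max (F n x) (G x) ∂μ) atTop (𝓝 (∫ x, G x ∂μ)) := by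
  refine tendsto_integral_of_dominated_convergence (fun x => |B x| + |G x|)
    (fun n => (hF n).sup hG.aestronglyMeasurable) (hB.abs.add hG.abs)
    (fun n => (hFB n).mono fun _ hx => abs_max_le_abs_add_abs_of_le hx) ?_
  filter_upwards [hFG] with x hx
  exact tendsto_order.2 ⟨fun a ha => Eventually.of_forall fun _ => ha.trans_le (le_max_right _ _),
    fun r hr => (hx r hr).mono fun _ hn => max_lt hn hr⟩

theorem ae_le_of_tendsto_setIntegral {f : ℕ → α → ℝ} {f₀ : α → ℝ} {F : ℕ → α → ℝ} {B G : α → ℝ}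
    (hf : ∀ n, Integrable (f n) μ) (hf₀ : Integrable f₀ μ)
    (hlim : ∀ s, MeasurableSet s → μ s < ⊤ →
      Tendsto (fun n => ∫ x in s, f n x ∂μ) atTop (𝓝 (∫ x in s, f₀ x ∂μ)))
    (hfF : ∀ n, f n ≤ᵐ[μ] F n) (hF : ∀ n, AEStronglyMeasurable (F n) μ) (hB : Integrable B μ)
    (hG : Integrable G μ) (hFB : ∀ n, ∀ᵐ x ∂μ, F n x ≤ B x)
    (hFG : ∀ᵐ x ∂μ, ∀ r, G x < r → ∀ᶠ n in atTop, F n x < r) :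
    f₀ ≤ᵐ[μ] G :=
  ae_le_of_forall_setIntegral_le hf₀ hG fun s hs hμs =>
    le_of_tendsto_of_tendsto' (hlim s hs hμs)
      (tendsto_integral_max_of_eventually_lt (fun n => (hF n).restrict) hB.integrableOn
        hG.integrableOn (fun n => ae_restrict_of_ae (hFB n)) (ae_restrict_of_ae hFG))
      fun n => setIntegral_mono_ae (hf n).integrableOn
        (integrable_max_of_ae_le (hF n) hB hG (hFB n)).integrableOn
        ((hfF n).mono fun _ hx => hx.trans (le_max_left _ _))

end ReverseFatou

theorem LocallyLipschitz.ae_mem_clarkeSubdiff_of_tendsto_setIntegral {α : Type*}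
    [MeasurableSpace α] {μ : Measure α} [IsFiniteMeasure μ] {j : ℝ → ℝ} (hj : LocallyLipschitz j)
    {c₁ c₂ : ℝ} (hc₂ : 0 ≤ c₂)
    (hgrowth : ∀ u ξ : ℝ, ξ ∈ clarkeSubdiff j u → |ξ| ≤ c₁ + c₂ * |u|)
    {un ξn : ℕ → α → ℝ} {u h ξ : α → ℝ} (hun : ∀ n, AEMeasurable (un n) μ)
    (hu : Integrable u μ) (hh : Integrable h μ) (hξn : ∀ n, Integrable (ξn n) μ)
    (hξ : Integrable ξ μ) (hae : ∀ᵐ x ∂μ, Tendsto (fun n => un n x) atTop (𝓝 (u x)))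
    (hdom : ∀ n, ∀ᵐ x ∂μ, |un n x| ≤ h x)
    (hweak : ∀ s, MeasurableSet s → μ s < ⊤ →
      Tendsto (fun n => ∫ x in s, ξn n x ∂μ) atTop (𝓝 (∫ x in s, ξ x ∂μ)))
    (hsel : ∀ n, ∀ᵐ x ∂μ, ξn n x ∈ clarkeSubdiff j (un n x)) :
    ∀ᵐ x ∂μ, ξ x ∈ clarkeSubdiff j (u x) := by
  have hdirDeriv : ∀ v, ∀ᵐ x ∂μ, ξ x * v ≤ clarkeDirDeriv j (u x) v := by
    intro v
    have hΦ := hj.upperSemicontinuous_clarkeDirDeriv v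
    have hbound := hj.abs_clarkeDirDeriv_le hgrowth (v := v)
    refine ae_le_of_tendsto_setIntegral (f := fun n x => ξn n x * v)
      (F := fun n x => clarkeDirDeriv j (un n x) v) (B := fun x => |v| * (c₁ + c₂ * h x))
      (fun n => (hξn n).mul_const v) (hξ.mul_const v)
      (fun s hs hμs => by simpa only [integral_mul_const] using (hweak s hs hμs).mul_const v)
      (fun n => (hsel n).mono fun x hx => hx v)
      (fun n => (hΦ.measurable.comp_aemeasurable (hun n)).aestronglyMeasurable)
      (((integrable_const c₁).add (hh.const_mul c₂)).const_mul |v|)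
      ((((integrable_const c₁).add (hu.abs.const_mul c₂)).const_mul |v|).mono'
        (hΦ.measurable.comp_aemeasurable hu.aemeasurable).aestronglyMeasurable
        (ae_of_all _ fun x => hbound (u x)))
      (fun n => (hdom n).mono fun x hx => (le_abs_self _).trans ((hbound _).trans (by gcongr)))
      (hae.mono fun x hx r hr => hx.eventually (hΦ (u x) r hr))
  filter_upwards [hdirDeriv 1, hdirDeriv (-1)] with x h₁ hm₁
  exact hj.mem_clarkeSubdiff_iff.2 ⟨by simpa using h₁, by simpa using hm₁⟩

theorem integral_mul_indicatorConstLp {α : Type*} [MeasurableSpace α] {μ : Measure α}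
    {p : ENNReal} {s : Set α} (f : α → ℝ) (hs : MeasurableSet s) (hμs : μ s ≠ ⊤) (c : ℝ) :
    ∫ x, f x * indicatorConstLp p hs hμs c x ∂μ = ∫ x in s, f x * c ∂μ := by
  rw [← integral_indicator hs]
  refine integral_congr_ae ?_
  filter_upwards [indicatorConstLp_coeFn (p := p) (hs := hs) (hμs := hμs) (c := c)] with x hx
  by_cases hxs : x ∈ s <;> simp [hx, hxs]

theorem weak_limit_of_selections_general
    {Γ : Type*} [MeasurableSpace Γ] (σ : Measure Γ) [IsFiniteMeasure σ]
    (j : ℝ → ℝ) (hj : LocallyLipschitz j)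
    (c₁ c₂ : ℝ) (hc₂ : 0 < c₂)
    (hgrowth : ∀ u ξ : ℝ, ξ ∈ clarkeSubdiff j u → |ξ| ≤ c₁ + c₂ * |u|)
    (un : ℕ → Lp ℝ 2 σ) (u : Lp ℝ 2 σ) (h : Lp ℝ 2 σ)
    (ξn : ℕ → Lp ℝ 2 σ) (ξ : Lp ℝ 2 σ)
    (hae : ∀ᵐ x ∂σ, Tendsto (fun n => un n x) atTop (nhds (u x)))
    (hdom : ∀ n : ℕ, ∀ᵐ x ∂σ, |un n x| ≤ h x)
    (hweak : ∀ g : Lp ℝ 2 σ,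
      Tendsto (fun n => ∫ x, ξn n x * g x ∂σ) atTop (nhds (∫ x, ξ x * g x ∂σ)))
    (hsel : ∀ n : ℕ, ∀ᵐ x ∂σ, ξn n x ∈ clarkeSubdiff j (un n x)) :
    ∀ᵐ x ∂σ, ξ x ∈ clarkeSubdiff j (u x) := by
  have hL1 : ∀ f : Lp ℝ 2 σ, Integrable f σ := fun f => (Lp.memLp f).integrable one_le_two
  refine hj.ae_mem_clarkeSubdiff_of_tendsto_setIntegral hc₂.le hgrowth
    (fun n => (Lp.aestronglyMeasurable (un n)).aemeasurable) (hL1 u) (hL1 h)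
    (fun n => hL1 (ξn n)) (hL1 ξ) hae hdom (fun s hs hμs => ?_) hsel
  simpa only [integral_mul_indicatorConstLp, mul_one] using
    hweak (indicatorConstLp 2 hs hμs.ne 1)

/-- a.e. weak limits of subdifferential selections are selections
(Aubin–Cellina type convergence theorem). -/
theorem weak_limit_of_selections
    {Γ : Type*} [MeasurableSpace Γ] (σ : Measure Γ) [IsFiniteMeasure σ]
    (j : ℝ → ℝ) (hj : LocallyLipschitz j)
    (c₁ c₂ : ℝ) (hc₁ : 0 < c₁) (hc₂ : 0 < c₂)
    (hgrowth : ∀ u ξ : ℝ, ξ ∈ clarkeSubdiff j u → |ξ| ≤ c₁ + c₂ * |u|)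
    (un : ℕ → Lp ℝ 2 σ) (u : Lp ℝ 2 σ) (h : Lp ℝ 2 σ)
    (ξn : ℕ → Lp ℝ 2 σ) (ξ : Lp ℝ 2 σ)
    (hstrong : Tendsto un atTop (nhds u))
    (hae : ∀ᵐ x ∂σ, Tendsto (fun n => un n x) atTop (nhds (u x)))
    (hdom : ∀ n : ℕ, ∀ᵐ x ∂σ, |un n x| ≤ h x)
    (hweak : ∀ g : Lp ℝ 2 σ,
      Tendsto (fun n => ∫ x, ξn n x * g x ∂σ) atTop (nhds (∫ x, ξ x * g x ∂σ)))
    (hsel : ∀ n : ℕ, ∀ᵐ x ∂σ, ξn n x ∈ clarkeSubdiff j (un n x)) :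
    ∀ᵐ x ∂σ, ξ x ∈ clarkeSubdiff j (u x) :=
  weak_limit_of_selections_general σ j hj c₁ c₂ hc₂ hgrowth un u h ξn ξ hae hdom hweak hsel
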